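/- arXiv:2212.02298 — 5 statements merged into one kernel-verified Lean document; each statement's English description precedes it below -/
import Mathlib

section
/- Any twist is selfadjoint: if T is a bounded operator on H⊗H with ‖T‖ ≤ 1 such that all operators P_{T,n} are positive (in particular P_{T,2} = 1 + T ≥ 0), then T = T*. -/
/-!
Only `P_{T,2} = 1 + T` is needed. In `ComplexOrder`, `0 ≤ z` forces `z` to be real, so an
operator on a complex Hilbert space with `0 ≤ ⟪x, A x⟫` for all `x` has a real quadratic form
and is selfadjoint by polarization. Applied to `A = 1 + T`, this makes `T` selfadjoint.
-/

noncomputable section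
open scoped ComplexOrder
open ContinuousLinearMap

/-- the ordered product `T_1 T_2 ⋯ T_j` (empty product `= 1` for `j = 0`). -/
def twistProd {W : Type*} [NormedAddCommGroup W] [InnerProductSpace ℂ W]
    (Tk : ℕ → (W →L[ℂ] W)) (j : ℕ) : W →L[ℂ] W :=
  ((List.range j).map fun i => Tk (i + 1)).prod

/-- `R_{T,n} = 1 + T_1 + T_1T_2 + ⋯ + T_1⋯T_{n-1}`. -/
def Rop {W : Type*} [NormedAddCommGroup W] [InnerProductSpace ℂ W]
    (Tk : ℕ → (W →L[ℂ] W)) (n : ℕ) : W →L[ℂ] W :=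
  ∑ j ∈ Finset.range n, twistProd Tk j

/-- `P_{T,n}`, defined by `P_{T,0} = P_{T,1} = 1` and
`P_{T,n+1} = (1 ⊗ P_{T,n}) R_{T,n+1}`, where `ampL n` is the amplification
`X ↦ 1 ⊗ X`. -/
def Pop {V : ℕ → Type*} [∀ n, NormedAddCommGroup (V n)] [∀ n, InnerProductSpace ℂ (V n)]
    (Tk : ∀ n, ℕ → (V n →L[ℂ] V n))
    (ampL : ∀ n, (V n →L[ℂ] V n) → (V (n + 1) →L[ℂ] V (n + 1))) : ∀ n, V n →L[ℂ] V n
  | 0 => 1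
  | n + 1 => ampL n (Pop Tk ampL n) * Rop (Tk (n + 1)) (n + 1)

theorem ContinuousLinearMap.isSelfAdjoint_of_forall_inner_nonneg {E : Type*}
    [NormedAddCommGroup E] [InnerProductSpace ℂ E] [CompleteSpace E] {A : E →L[ℂ] E}
    (hA : ∀ x, 0 ≤ inner ℂ x (A x)) : IsSelfAdjoint A := by
  refine LinearMap.IsSymmetric.isSelfAdjoint <|
    (LinearMap.isSymmetric_iff_inner_map_self_real _).mpr fun x => ?_
  calc (starRingEnd ℂ) (inner ℂ (A x) x) = inner ℂ x (A x) := inner_conj_symm _ _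
    _ = star (inner ℂ x (A x)) := (IsSelfAdjoint.of_nonneg (hA x)).star_eq.symm
    _ = inner ℂ (A x) x := inner_conj_symm _ _

theorem Rop_two {W : Type*} [NormedAddCommGroup W] [InnerProductSpace ℂ W]
    (Tk : ℕ → (W →L[ℂ] W)) : Rop Tk 2 = 1 + Tk 1 := by
  simp [Rop, twistProd, Finset.sum_range_succ]

section Pop

variable {V : ℕ → Type*} [∀ n, NormedAddCommGroup (V n)] [∀ n, InnerProductSpace ℂ (V n)]
  (Tk : ∀ n, ℕ → (V n →L[ℂ] V n)) (ampL : ∀ n, (V n →L[ℂ] V n) → (V (n + 1) →L[ℂ] V (n + 1)))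

theorem Pop_one (h : ampL 0 1 = 1) : Pop Tk ampL 1 = 1 := by
  simp [Pop, Rop, twistProd, h]

theorem Pop_two (hampL_one : ∀ n, ampL n 1 = 1) : Pop Tk ampL 2 = 1 + Tk 2 1 := by
  rw [Pop, Pop_one Tk ampL (hampL_one 0), hampL_one, Rop_two, one_mul]

end Pop

theorem twist_isSelfAdjoint_general
    {V : ℕ → Type*} [∀ n, NormedAddCommGroup (V n)] [∀ n, InnerProductSpace ℂ (V n)]
    [∀ n, CompleteSpace (V n)]
    (Tk : ∀ n, ℕ → (V n →L[ℂ] V n))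
    (ampL : ∀ n, (V n →L[ℂ] V n) → (V (n + 1) →L[ℂ] V (n + 1)))
    (hampL_one : ∀ n, ampL n 1 = 1)
    (hpos : ∀ n (x : V n), 0 ≤ (inner ℂ x (Pop Tk ampL n x) : ℂ)) :
    IsSelfAdjoint (Tk 2 1) := by
  have hP₂ := ContinuousLinearMap.isSelfAdjoint_of_forall_inner_nonneg (hpos 2)
  rw [Pop_two Tk ampL hampL_one] at hP₂
  simpa only [add_sub_cancel_left] using hP₂.sub (IsSelfAdjoint.one _)

/-- If `T` is a bounded operator on `H ⊗ H` with `‖T‖ ≤ 1` such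
that all the operators `P_{T,n}` are positive (in particular
`P_{T,2} = 1 + T ≥ 0`), then `T = T*`. -/
theorem twist_isSelfAdjoint
    {V : ℕ → Type*} [∀ n, NormedAddCommGroup (V n)] [∀ n, InnerProductSpace ℂ (V n)]
    [∀ n, CompleteSpace (V n)]
    (Tk : ∀ n, ℕ → (V n →L[ℂ] V n))
    (ampL : ∀ n, (V n →L[ℂ] V n) → (V (n + 1) →L[ℂ] V (n + 1)))
    (hampL_one : ∀ n, ampL n 1 = 1)
    (hnorm : ‖Tk 2 1‖ ≤ 1)
    (hpos : ∀ n (x : V n), 0 ≤ (inner ℂ x (Pop Tk ampL n x) : ℂ)) :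
    IsSelfAdjoint (Tk 2 1) :=
  twist_isSelfAdjoint_general Tk ampL hampL_one hpos
end
end

section
/- The left creation operator bound: for a twist T and ξ ∈ H, the creation operator a*_{L,T}(ξ), defined on the n-particle space by [Ψ_n] ↦ [ξ ⊗ Ψ_n] with respect to the twisted inner product ⟨·, P_{T,n}·⟩, satisfies ‖a*_{L,T}(ξ)|_{H_{T,n}}‖_T ≤ √(c_{T,n}) ‖ξ‖, where c_{T,n} = Σ_{k=0}^n ‖T‖^k. In particular, if ‖T‖ < 1 then ‖a*_{L,T}(ξ)‖_T ≤ ‖ξ‖/√(1−‖T‖). -/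
/-!
Write `P_{T,n+1} = A R` with `A = 1 ⊗ P_{T,n} ≥ 0` and `R = R_{T,n+1}`, so that
`‖R‖ ≤ Σ_{j ≤ n} ‖T‖^j = c_{T,n}`. Since `A R` is self-adjoint, `R` is symmetric for the
semi-inner product `⟨·, A ·⟩`, so its norm there is controlled by its spectral radius, hence by
`‖R‖`. Concretely, `u_k = ‖A^{1/2} R^k Φ‖` is log-convex (`u_{k+1}² ≤ u_k u_{k+2}`) and grows at
most like `‖R‖^k`, which forces `u_1 ≤ ‖R‖ u_0`; thus `⟨Φ, P_{T,n+1} Φ⟩ ≤ ‖R‖ ⟨Φ, A Φ⟩`. For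
`Φ = ξ ⊗ Ψ` the right-hand form is `‖ξ‖² ⟨Ψ, P_{T,n} Ψ⟩`.
-/

noncomputable section
open ContinuousLinearMap
open scoped InnerProductSpace

theorem le_of_forall_pow_le_mul_pow {a b C : ℝ} (hb : 0 ≤ b) (h : ∀ k : ℕ, a ^ k ≤ C * b ^ k) :
    a ≤ b := by
  by_contra! hba
  rcases hb.eq_or_lt with rfl | hb
  · have h1 := h 1
    simp only [pow_one, mul_zero] at h1
    exact h1.not_gt hba
  · obtain ⟨k, hk⟩ := pow_unbounded_of_one_lt C ((one_lt_div hb).2 hba)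
    rw [div_pow, lt_div_iff₀ (pow_pos hb k)] at hk
    exact (h k).not_gt hk

section LogConvex

variable {u : ℕ → ℝ}

theorem mul_le_mul_succ_of_logConvex (hu : ∀ k, 0 ≤ u k)
    (hlc : ∀ k, u (k + 1) ^ 2 ≤ u k * u (k + 2)) (k : ℕ) : u 1 * u k ≤ u 0 * u (k + 1) := by
  induction k with
  | zero => rw [mul_comm]
  | succ k ih =>
    have hsq : (u 1 * u (k + 1)) ^ 2 ≤ (u 0 * u (k + 2)) * (u 1 * u (k + 1)) :=
      calc (u 1 * u (k + 1)) ^ 2 ≤ u 1 ^ 2 * (u k * u (k + 2)) := by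
            rw [mul_pow]; exact mul_le_mul_of_nonneg_left (hlc k) (sq_nonneg _)
        _ = (u 1 * u k) * (u 1 * u (k + 2)) := by ring
        _ ≤ (u 0 * u (k + 1)) * (u 1 * u (k + 2)) :=
            mul_le_mul_of_nonneg_right ih (mul_nonneg (hu 1) (hu _))
        _ = (u 0 * u (k + 2)) * (u 1 * u (k + 1)) := by ring
    have hx := mul_nonneg (hu 1) (hu (k + 1))
    have hy := mul_nonneg (hu 0) (hu (k + 2))
    nlinarith

theorem pow_mul_le_pow_mul_of_logConvex (hu : ∀ k, 0 ≤ u k)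
    (hlc : ∀ k, u (k + 1) ^ 2 ≤ u k * u (k + 2)) (k : ℕ) : u 1 ^ k * u 0 ≤ u 0 ^ k * u k := by
  induction k with
  | zero => simp
  | succ k ih =>
    calc u 1 ^ (k + 1) * u 0 = u 1 * (u 1 ^ k * u 0) := by ring
      _ ≤ u 1 * (u 0 ^ k * u k) := mul_le_mul_of_nonneg_left ih (hu 1)
      _ = u 0 ^ k * (u 1 * u k) := by ring
      _ ≤ u 0 ^ k * (u 0 * u (k + 1)) := mul_le_mul_of_nonneg_left
            (mul_le_mul_succ_of_logConvex hu hlc k) (pow_nonneg (hu 0) k)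
      _ = u 0 ^ (k + 1) * u (k + 1) := by ring

theorem le_mul_of_logConvex_of_le_geometric (hu : ∀ k, 0 ≤ u k)
    (hlc : ∀ k, u (k + 1) ^ 2 ≤ u k * u (k + 2)) {K c : ℝ} (hc : 0 ≤ c)
    (hgrowth : ∀ k, u k ≤ K * c ^ k) : u 1 ≤ c * u 0 := by
  rcases (hu 0).eq_or_lt with h0 | h0
  · have h1 := hlc 0
    rw [← h0, zero_mul] at h1
    rw [← h0, mul_zero]
    nlinarith
  · refine le_of_forall_pow_le_mul_pow (C := K / u 0) (mul_nonneg hc h0.le) fun k => ?_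
    refine le_of_mul_le_mul_right ?_ h0
    calc u 1 ^ k * u 0 ≤ u 0 ^ k * u k := pow_mul_le_pow_mul_of_logConvex hu hlc k
      _ ≤ u 0 ^ k * (K * c ^ k) := mul_le_mul_of_nonneg_left (hgrowth k) (pow_nonneg h0.le k)
      _ = K / u 0 * (c * u 0) ^ k * u 0 := by field_simp; ring

end LogConvex

section Operator

variable {W : Type*} [NormedAddCommGroup W] [InnerProductSpace ℂ W]

theorem norm_twistProd_le {Tk : ℕ → W →L[ℂ] W} {c : ℝ} (hTk : ∀ k, ‖Tk k‖ ≤ c) (j : ℕ) :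
    ‖twistProd Tk j‖ ≤ c ^ j := by
  induction j with
  | zero => simpa [twistProd, one_def] using norm_id_le
  | succ j ih =>
    have hc : 0 ≤ c := (norm_nonneg _).trans (hTk 0)
    rw [twistProd, List.range_succ, List.map_append, List.prod_append, ← twistProd, pow_succ]
    simpa using (norm_mul_le _ _).trans (mul_le_mul ih (hTk _) (norm_nonneg _) (pow_nonneg hc j))

theorem norm_Rop_le {Tk : ℕ → W →L[ℂ] W} {c : ℝ} (hTk : ∀ k, ‖Tk k‖ ≤ c) (n : ℕ) :
    ‖Rop Tk n‖ ≤ ∑ j ∈ Finset.range n, c ^ j :=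
  (norm_sum_le _ _).trans (Finset.sum_le_sum fun j _ => norm_twistProd_le hTk j)

variable [CompleteSpace W]

theorem inner_sqrt_apply_sqrt_apply {A : W →L[ℂ] W} (hA : A.IsPositive) (y z : W) :
    ⟪CFC.sqrt A y, CFC.sqrt A z⟫_ℂ = ⟪y, A z⟫_ℂ := by
  have hS : IsSelfAdjoint (CFC.sqrt A) := .of_nonneg (CFC.sqrt_nonneg A)
  calc ⟪CFC.sqrt A y, CFC.sqrt A z⟫_ℂ = ⟪y, CFC.sqrt A (CFC.sqrt A z)⟫_ℂ := hS.isSymmetric _ _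
    _ = ⟪y, A z⟫_ℂ := by
      rw [← mul_apply_eq_comp,
        CFC.sqrt_mul_sqrt_self A ((nonneg_iff_isPositive A).2 hA)]

theorem re_inner_mul_apply_le {A R : W →L[ℂ] W} (hA : A.IsPositive) (hAR : IsSelfAdjoint (A * R))
    (x : W) : (⟪x, (A * R) x⟫_ℂ).re ≤ ‖R‖ * (⟪x, A x⟫_ℂ).re := by
  set S := CFC.sqrt A
  have hshift : ∀ y z, ⟪R y, A z⟫_ℂ = ⟪y, A (R z)⟫_ℂ := fun y z =>
    calc ⟪R y, A z⟫_ℂ = ⟪(A * R) y, z⟫_ℂ := (hA.inner_left_eq_inner_right _ _).symm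
      _ = ⟪y, (A * R) z⟫_ℂ := hAR.isSymmetric y z
  have hsucc : ∀ k, (R ^ (k + 1)) x = R ((R ^ k) x) := fun k => by
    rw [pow_succ', mul_apply_eq_comp]
  set u : ℕ → ℝ := fun k => ‖S ((R ^ k) x)‖
  have hlc : ∀ k, u (k + 1) ^ 2 ≤ u k * u (k + 2) := fun k => by
    calc u (k + 1) ^ 2 = (⟪S ((R ^ k) x), S ((R ^ (k + 2)) x)⟫_ℂ).re := by
          rw [← inner_self_eq_norm_sq (𝕜 := ℂ), inner_sqrt_apply_sqrt_apply hA,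
            inner_sqrt_apply_sqrt_apply hA, hsucc (k + 1), hsucc k, hshift]
          rfl
      _ ≤ u k * u (k + 2) := re_inner_le_norm (𝕜 := ℂ) _ _
  have hpow : ∀ k, ‖(R ^ k) x‖ ≤ ‖R‖ ^ k * ‖x‖ := fun k => by
    induction k with
    | zero => simp
    | succ k ih => rw [hsucc, pow_succ', mul_assoc]; exact R.le_opNorm_of_le ih
  have hgrowth : ∀ k, u k ≤ (‖S‖ * ‖x‖) * ‖R‖ ^ k := fun k =>
    (S.le_opNorm_of_le (hpow k)).trans_eq (by ring)
  have hratio : u 1 ≤ ‖R‖ * u 0 :=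
    le_mul_of_logConvex_of_le_geometric (fun k => norm_nonneg _) hlc (norm_nonneg R) hgrowth
  calc (⟪x, (A * R) x⟫_ℂ).re = (⟪S x, S (R x)⟫_ℂ).re := by
        rw [inner_sqrt_apply_sqrt_apply hA, mul_apply_eq_comp]
    _ ≤ u 0 * u 1 := by simpa [u] using re_inner_le_norm (𝕜 := ℂ) (S x) (S (R x))
    _ ≤ u 0 * (‖R‖ * u 0) := by gcongr
    _ = ‖R‖ * (⟪x, A x⟫_ℂ).re := by
        rw [← inner_sqrt_apply_sqrt_apply hA, ← RCLike.re_to_complex, inner_self_eq_norm_sq]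
        simp only [u, pow_zero, one_apply_eq_self]
        ring

end Operator

-- `V n` is `H^{⊗n}`, `Tk n k` the amplification `T_k` of the twist `T = Tk 2 1` to `H^{⊗n}`,
-- `ampL n` is `X ↦ 1 ⊗ X` and `tens n ξ Ψ = ξ ⊗ Ψ`.
theorem creation_operator_bound_general
    {V : ℕ → Type*} [∀ n, NormedAddCommGroup (V n)] [∀ n, InnerProductSpace ℂ (V n)]
    [∀ n, CompleteSpace (V n)]
    (Tk : ∀ n, ℕ → (V n →L[ℂ] V n))
    (ampL : ∀ n, (V n →L[ℂ] V n) → (V (n + 1) →L[ℂ] V (n + 1)))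
    (tens : ∀ n, V 1 → V n → V (n + 1))
    (hTk_norm : ∀ n k, ‖Tk n k‖ ≤ ‖Tk 2 1‖)
    (hampL_pos : ∀ n (A : V n →L[ℂ] V n), A.IsPositive → (ampL n A).IsPositive)
    (hpos : ∀ n, (Pop Tk ampL n).IsPositive)
    (htens_inner : ∀ n (ξ ξ' : V 1) (Ψ Ψ' : V n),
      (inner ℂ (tens n ξ Ψ) (tens n ξ' Ψ') : ℂ) = inner ℂ ξ ξ' * inner ℂ Ψ Ψ')
    (htens_amp : ∀ n (A : V n →L[ℂ] V n) (ξ : V 1) (Ψ : V n),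
      ampL n A (tens n ξ Ψ) = tens n ξ (A Ψ)) :
    ∀ n (ξ : V 1) (Ψ : V n),
      ((inner ℂ (tens n ξ Ψ) (Pop Tk ampL (n + 1) (tens n ξ Ψ)) : ℂ)).re
          ≤ (∑ k ∈ Finset.range (n + 1), ‖Tk 2 1‖ ^ k) * ‖ξ‖ ^ 2
            * ((inner ℂ Ψ (Pop Tk ampL n Ψ) : ℂ)).re ∧
      (‖Tk 2 1‖ < 1 →
        ((inner ℂ (tens n ξ Ψ) (Pop Tk ampL (n + 1) (tens n ξ Ψ)) : ℂ)).re
          ≤ (1 - ‖Tk 2 1‖)⁻¹ * ‖ξ‖ ^ 2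
            * ((inner ℂ Ψ (Pop Tk ampL n Ψ) : ℂ)).re) := by
  intro n ξ Ψ
  set Φ := tens n ξ Ψ
  set A := ampL n (Pop Tk ampL n)
  have hA : A.IsPositive := hampL_pos n _ (hpos n)
  have hP : Pop Tk ampL (n + 1) = A * Rop (Tk (n + 1)) (n + 1) := rfl
  have hAΦ : (⟪Φ, A Φ⟫_ℂ).re = ‖ξ‖ ^ 2 * (⟪Ψ, Pop Tk ampL n Ψ⟫_ℂ).re := by
    rw [htens_amp, htens_inner, inner_self_eq_norm_sq_to_K, ← RCLike.ofReal_pow]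
    exact Complex.re_ofReal_mul _ _
  have hbound : (⟪Φ, Pop Tk ampL (n + 1) Φ⟫_ℂ).re
      ≤ (∑ k ∈ Finset.range (n + 1), ‖Tk 2 1‖ ^ k) * ‖ξ‖ ^ 2 * (⟪Ψ, Pop Tk ampL n Ψ⟫_ℂ).re :=
    calc (⟪Φ, Pop Tk ampL (n + 1) Φ⟫_ℂ).re ≤ ‖Rop (Tk (n + 1)) (n + 1)‖ * (⟪Φ, A Φ⟫_ℂ).re := by
          rw [hP]; exact re_inner_mul_apply_le hA (hP ▸ (hpos (n + 1)).isSelfAdjoint) Φ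
      _ ≤ (∑ k ∈ Finset.range (n + 1), ‖Tk 2 1‖ ^ k) * (⟪Φ, A Φ⟫_ℂ).re := by
          gcongr
          · exact hA.re_inner_nonneg_right Φ
          · exact norm_Rop_le (hTk_norm (n + 1)) (n + 1)
      _ = _ := by rw [hAΦ]; ring
  refine ⟨hbound, fun hlt => hbound.trans ?_⟩
  have hΨ : 0 ≤ (⟪Ψ, Pop Tk ampL n Ψ⟫_ℂ).re := (hpos n).re_inner_nonneg_right Ψ
  have hgeom : ∑ k ∈ Finset.range (n + 1), ‖Tk 2 1‖ ^ k ≤ (1 - ‖Tk 2 1‖)⁻¹ := by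
    simpa [Nat.Ico_zero_eq_range] using
      geom_sum_Ico_le_of_lt_one (m := 0) (n := n + 1) (norm_nonneg (Tk 2 1)) hlt
  exact mul_le_mul_of_nonneg_right (mul_le_mul_of_nonneg_right hgeom (sq_nonneg _)) hΨ

/-- Twisted creation operator bound: for a twist `T` and
`ξ ∈ H`, `‖a*_{L,T}(ξ)[Ψ]‖_T² ≤ c_{T,n} ‖ξ‖² ‖[Ψ]‖_T²`, i.e.
`⟨ξ⊗Ψ, P_{T,n+1}(ξ⊗Ψ)⟩ ≤ c_{T,n} ‖ξ‖² ⟨Ψ, P_{T,n}Ψ⟩` with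
`c_{T,n} = Σ_{k=0}^n ‖T‖^k`; in particular, if `‖T‖ < 1` then
`⟨ξ⊗Ψ, P_{T,n+1}(ξ⊗Ψ)⟩ ≤ (1-‖T‖)⁻¹ ‖ξ‖² ⟨Ψ, P_{T,n}Ψ⟩`
(the bound `‖a*_{L,T}(ξ)‖_T ≤ ‖ξ‖/√(1-‖T‖)`). -/
theorem creation_operator_bound
    {V : ℕ → Type*} [∀ n, NormedAddCommGroup (V n)] [∀ n, InnerProductSpace ℂ (V n)]
    [∀ n, CompleteSpace (V n)]
    (Tk : ∀ n, ℕ → (V n →L[ℂ] V n))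
    (ampL : ∀ n, (V n →L[ℂ] V n) → (V (n + 1) →L[ℂ] V (n + 1)))
    (tens : ∀ n, V 1 → V n → V (n + 1))
    (hTk_sa : ∀ n k, IsSelfAdjoint (Tk n k))
    (hnorm : ‖Tk 2 1‖ ≤ 1)
    (hTk_norm : ∀ n k, ‖Tk n k‖ ≤ ‖Tk 2 1‖)
    (hampL_one : ∀ n, ampL n 1 = 1)
    (hampL_mul : ∀ n (A B : V n →L[ℂ] V n), ampL n (A * B) = ampL n A * ampL n B)
    (hampL_add : ∀ n (A B : V n →L[ℂ] V n), ampL n (A + B) = ampL n A + ampL n B)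
    (hampL_star : ∀ n (A : V n →L[ℂ] V n), ampL n (adjoint A) = adjoint (ampL n A))
    (hampL_Tk : ∀ n k, ampL n (Tk n k) = Tk (n + 1) (k + 1))
    (hampL_pos : ∀ n (A : V n →L[ℂ] V n), A.IsPositive → (ampL n A).IsPositive)
    (hpos : ∀ n, (Pop Tk ampL n).IsPositive)
    (htens_inner : ∀ n (ξ ξ' : V 1) (Ψ Ψ' : V n),
      (inner ℂ (tens n ξ Ψ) (tens n ξ' Ψ') : ℂ) = inner ℂ ξ ξ' * inner ℂ Ψ Ψ')
    (htens_amp : ∀ n (A : V n →L[ℂ] V n) (ξ : V 1) (Ψ : V n),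
      ampL n A (tens n ξ Ψ) = tens n ξ (A Ψ)) :
    ∀ n (ξ : V 1) (Ψ : V n),
      ((inner ℂ (tens n ξ Ψ) (Pop Tk ampL (n + 1) (tens n ξ Ψ)) : ℂ)).re
          ≤ (∑ k ∈ Finset.range (n + 1), ‖Tk 2 1‖ ^ k) * ‖ξ‖ ^ 2
            * ((inner ℂ Ψ (Pop Tk ampL n Ψ) : ℂ)).re ∧
      (‖Tk 2 1‖ < 1 →
        ((inner ℂ (tens n ξ Ψ) (Pop Tk ampL (n + 1) (tens n ξ Ψ)) : ℂ)).re
          ≤ (1 - ‖Tk 2 1‖)⁻¹ * ‖ξ‖ ^ 2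
            * ((inner ℂ Ψ (Pop Tk ampL n Ψ) : ℂ)).re) :=
  creation_operator_bound_general Tk ampL tens hTk_norm hampL_pos hpos htens_inner htens_amp
end
end

section
/- If Ω is separating for the polynomial *-algebra P_{L,T}(H) generated by the field operators φ_{L,T}(h), h ∈ H, then H is a separating real subspace, i.e. H ∩ iH = {0}. -/
/-!
If `x = i y` with `x, y ∈ H`, then the fields `Φ x` and `i Φ y` agree on the vacuum, so they
are equal since `Ω` is separating. Taking adjoints of the selfadjoint operators gives
`Φ x = -i Φ y` as well, hence `Φ y = 0`, and `y = Φ y Ω = 0`.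
-/

theorem IsSelfAdjoint.eq_zero_of_eq_I_smul {A : Type*} [AddCommGroup A] [StarAddMonoid A]
    [Module ℂ A] [StarModule ℂ A] {a b : A} (ha : IsSelfAdjoint a) (hb : IsSelfAdjoint b)
    (hab : a = Complex.I • b) : b = 0 := by
  have hab' : a = -(Complex.I • b) := by
    rw [← ha.star_eq, hab, star_smul, hb.star_eq, Complex.star_def, Complex.conj_I, neg_smul]
  have h2I : (2 * Complex.I) • b = 0 := by
    linear_combination (norm := module) hab.symm.trans hab'
  exact (smul_eq_zero.mp h2I).resolve_left (by simp)

theorem ContinuousLinearMap.eq_of_apply_eq_of_separating {R M S : Type*} [Ring R]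
    [TopologicalSpace M] [AddCommGroup M] [IsTopologicalAddGroup M] [Module R M]
    [SetLike S (M →L[R] M)] [AddSubgroupClass S (M →L[R] M)] {s : S} {Ω : M}
    (hsep : ∀ A ∈ s, A Ω = 0 → A = 0) {A B : M →L[R] M} (hA : A ∈ s) (hB : B ∈ s)
    (hAB : A Ω = B Ω) : A = B :=
  sub_eq_zero.mp <| hsep _ (sub_mem hA hB) (by rw [sub_apply, hAB, sub_self])

theorem separating_vacuum_implies_separating_subspace_general
    {𝓗 𝓕 : Type*} [NormedAddCommGroup 𝓗] [InnerProductSpace ℂ 𝓗]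
    [NormedAddCommGroup 𝓕] [InnerProductSpace ℂ 𝓕] [CompleteSpace 𝓕]
    (H : Submodule ℝ 𝓗)
    (ι : 𝓗 →ₗᵢ[ℂ] 𝓕) (Ω : 𝓕)
    (Φ : 𝓗 → (𝓕 →L[ℂ] 𝓕))
    (hΦ_sa : ∀ h ∈ H, IsSelfAdjoint (Φ h))
    (hΦ_vac : ∀ h ∈ H, Φ h Ω = ι h)
    (hsep : ∀ A ∈ Algebra.adjoin ℂ (Φ '' (H : Set 𝓗)), A Ω = 0 → A = 0) :
    ∀ x ∈ H, ∀ y ∈ H, x = Complex.I • y → x = 0 := by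
  intro x hx y hy hxy
  have mem_adjoin {h : 𝓗} (hh : h ∈ H) : Φ h ∈ Algebra.adjoin ℂ (Φ '' (H : Set 𝓗)) :=
    Algebra.subset_adjoin ⟨h, hh, rfl⟩
  have hΦ : Φ x = Complex.I • Φ y :=
    ContinuousLinearMap.eq_of_apply_eq_of_separating hsep (mem_adjoin hx)
      (Subalgebra.smul_mem _ (mem_adjoin hy) _) <| by
        rw [smul_apply, hΦ_vac x hx, hΦ_vac y hy, hxy, ι.map_smul]
  have hΦy : Φ y = 0 := (hΦ_sa x hx).eq_zero_of_eq_I_smul (hΦ_sa y hy) hΦ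
  have hy0 : y = 0 := ι.injective <| by
    rw [← hΦ_vac y hy, hΦy, map_zero, zero_apply]
  rw [hxy, hy0, smul_zero]

/-- If `Ω` is separating for `P_{L,T}(H)`, then
`H ∩ iH = {0}`. -/
theorem separating_vacuum_implies_separating_subspace
    {𝓗 𝓕 : Type*} [NormedAddCommGroup 𝓗] [InnerProductSpace ℂ 𝓗] [CompleteSpace 𝓗]
    [NormedAddCommGroup 𝓕] [InnerProductSpace ℂ 𝓕] [CompleteSpace 𝓕]
    (H : Submodule ℝ 𝓗)
    (ι : 𝓗 →ₗᵢ[ℂ] 𝓕) (Ω : 𝓕)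
    (Φ : 𝓗 → (𝓕 →L[ℂ] 𝓕))
    (hΦ_add : ∀ x y, Φ (x + y) = Φ x + Φ y)
    (hΦ_smul : ∀ (r : ℝ) (x : 𝓗), Φ (r • x) = r • Φ x)
    (hΦ_sa : ∀ h ∈ H, IsSelfAdjoint (Φ h))
    (hΦ_vac : ∀ h ∈ H, Φ h Ω = ι h)
    (hsep : ∀ A ∈ Algebra.adjoin ℂ (Φ '' (H : Set 𝓗)), A Ω = 0 → A = 0) :
    ∀ x ∈ H, ∀ y ∈ H, x = Complex.I • y → x = 0 :=
  separating_vacuum_implies_separating_subspace_general H ι Ω Φ hΦ_sa hΦ_vac hsep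
end

section
/- If a bounded selfadjoint operator T on H⊗H is crossing symmetric with respect to a standard subspace H and compatible with H (i.e. commutes with Δ_H^{it} ⊗ Δ_H^{it}), then F T F = (J_H ⊗ J_H) T (J_H ⊗ J_H), where F is the tensor flip. -/
/-!
The real-line values of the crossing function `f` of `(b, J d, c, J a)` coincide, by
compatibility, with the values on the upper edge of the crossing function `g` of
`(J d, J c, J a, J b)`, reflected by `z ↦ -z + i/2`. So `f - g(-· + i/2)` is a bounded
holomorphic function on the strip vanishing on its lower edge, hence zero; comparing it at `i/2`
gives `⟨b ⊗ a, T (d ⊗ c)⟩ = ⟨Jc ⊗ Jd, T (Ja ⊗ Jb)⟩`. Since the flip and `J ⊗ J` are symmetric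
with respect to the inner product, this identity is `F T F = (J ⊗ J) T (J ⊗ J)` on product
vectors, and product vectors are total.
-/

/-- Axiomatization of the modular data of a standard subspace (the parts
relevant here: the modular group and the modular conjugation). -/
structure ModularData (𝓗 : Type*) [NormedAddCommGroup 𝓗] [InnerProductSpace ℂ 𝓗]
    [CompleteSpace 𝓗] where
  U : ℝ → (𝓗 ≃ₗᵢ[ℂ] 𝓗)
  U_zero : U 0 = LinearIsometryEquiv.refl ℂ 𝓗
  U_add : ∀ s t, U (s + t) = (U t).trans (U s)
  U_cont : Continuous fun p : ℝ × 𝓗 => U p.1 p.2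
  J : 𝓗 → 𝓗
  J_add : ∀ x y, J (x + y) = J x + J y
  J_smul : ∀ (c : ℂ) (x : 𝓗), J (c • x) = (starRingEnd ℂ) c • J x
  J_invol : ∀ x, J (J x) = x
  J_inner : ∀ x y, (inner ℂ (J x) (J y) : ℂ) = inner ℂ y x
  J_U : ∀ t x, J (U t x) = U t (J x)

open Complex ComplexConjugate Set Filter Topology

theorem eqOn_zero_horizontal_strip_of_eq_zero_on_line {a b c : ℝ} (hac : a < c) (hcb : c < b)
    {d : ℂ → ℂ} (hd_cont : ContinuousOn d (im ⁻¹' Icc a b))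
    (hd_diff : DifferentiableOn ℂ d (im ⁻¹' Ioo a b)) (hd_c : ∀ z : ℂ, z.im = c → d z = 0) :
    EqOn d 0 (im ⁻¹' Icc a b) := by
  have hopen : IsOpen (im ⁻¹' Ioo a b) := isOpen_Ioo.preimage continuous_im
  have hconn : IsPreconnected (im ⁻¹' Ioo a b) :=
    ((convex_Ioo a b).linear_preimage imLm).isPreconnected
  have hclos : closure (im ⁻¹' Ioo a b) = im ⁻¹' Icc a b := by
    rw [closure_preimage_im, closure_Ioo (hac.trans hcb).ne]
  have hfreq : ∃ᶠ z in 𝓝[≠] (c * I), d z = 0 := by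
    have hlim : Tendsto (fun t : ℝ => c * I + t) (𝓝[≠] 0) (𝓝[≠] (c * I)) :=
      tendsto_nhdsWithin_of_tendsto_nhds_of_eventually_within _
        ((Continuous.tendsto' (by fun_prop) 0 _ (by simp)).mono_left nhdsWithin_le_nhds)
        (eventually_nhdsWithin_of_forall fun t ht => by simpa using ht)
    exact hlim.frequently (Frequently.of_forall fun t => hd_c _ (by simp))
  exact ((hd_diff.analyticOnNhd hopen).eqOn_zero_of_preconnected_of_frequently_eq_zero hconn
    (by simp [hac, hcb]) hfreq).of_subset_closure hd_cont continuousOn_const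
    (hclos ▸ subset_closure) hclos.ge

theorem eqOn_zero_horizontal_strip_of_bounded {a b : ℝ} (hab : a < b) {e : ℂ → ℂ}
    (he : DiffContOnCl ℂ e (im ⁻¹' Ioo a b)) (he_bdd : ∃ C, ∀ z ∈ im ⁻¹' Ioo a b, ‖e z‖ ≤ C)
    (ha : ∀ z : ℂ, z.im = a → e z = 0) (hb : ∀ z : ℂ, z.im = b → e z = 0) :
    EqOn e 0 (im ⁻¹' Icc a b) := by
  obtain ⟨C, hC⟩ := he_bdd
  refine PhragmenLindelof.eq_zero_on_horizontal_strip he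
    ⟨0, by have := sub_pos.2 hab; positivity, 0, ?_⟩ ha hb
  refine Asymptotics.IsBigO.of_bound C (eventually_inf_principal.2 <|
    Eventually.of_forall fun z hz => ?_)
  simpa using hC z hz

theorem eqOn_zero_horizontal_strip_of_eq_zero_on_lower_edge {a b : ℝ} (hab : a < b)
    {d : ℂ → ℂ} (hd_bdd : ∃ C, ∀ z ∈ im ⁻¹' Icc a b, ‖d z‖ ≤ C)
    (hd_cont : ContinuousOn d (im ⁻¹' Icc a b))
    (hd_diff : DifferentiableOn ℂ d (im ⁻¹' Ioo a b)) (hd_a : ∀ z : ℂ, z.im = a → d z = 0) :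
    EqOn d 0 (im ⁻¹' Icc a b) := by
  obtain ⟨C, hC⟩ := hd_bdd
  set ρ : ℂ → ℂ := fun z => conj z + ((a + b : ℝ) : ℂ) * I
  have hρ_im : ∀ z, (ρ z).im = a + b - z.im := fun z => by simp [ρ]; ring
  have hρ_Icc : MapsTo ρ (im ⁻¹' Icc a b) (im ⁻¹' Icc a b) := fun z hz => by
    simp only [mem_preimage, mem_Icc, hρ_im] at hz ⊢; constructor <;> linarith [hz.1, hz.2]
  have hρ_Ioo : MapsTo ρ (im ⁻¹' Ioo a b) (im ⁻¹' Ioo a b) := fun z hz => by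
    simp only [mem_preimage, mem_Ioo, hρ_im] at hz ⊢; constructor <;> linarith [hz.1, hz.2]
  have hopen : IsOpen (im ⁻¹' Ioo a b) := isOpen_Ioo.preimage continuous_im
  have hclos : closure (im ⁻¹' Ioo a b) = im ⁻¹' Icc a b := by
    rw [closure_preimage_im, closure_Ioo hab.ne]
  -- `ρ` swaps the two edges and fixes the midline, where `e = |d|²`.
  set e : ℂ → ℂ := fun z => d z * conj (d (ρ z))
  have he : DiffContOnCl ℂ e (im ⁻¹' Ioo a b) := by
    refine ⟨hd_diff.mul fun z hz => DifferentiableAt.differentiableWithinAt ?_, ?_⟩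
    · have hd : DifferentiableAt ℂ (fun w => d (w + ((a + b : ℝ) : ℂ) * I)) (conj z) :=
        (hd_diff.differentiableAt (hopen.mem_nhds (hρ_Ioo hz))).comp (conj z)
          (differentiableAt_id.add_const _)
      exact differentiableAt_conj_conj_iff.2 hd
    · rw [hclos]
      exact hd_cont.mul (continuous_conj.comp_continuousOn (hd_cont.comp (by fun_prop) hρ_Icc))
  have he_zero : EqOn e 0 (im ⁻¹' Icc a b) := by
    refine eqOn_zero_horizontal_strip_of_bounded hab he ⟨C * C, fun z hz => ?_⟩
      (fun z hz => by simp [e, hd_a z hz])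
      (fun z hz => by simp [e, hd_a (ρ z) (by rw [hρ_im, hz]; ring)])
    have hz' := hclos ▸ subset_closure hz
    simpa [e] using mul_le_mul (hC z hz') (hC _ (hρ_Icc hz')) (norm_nonneg _)
      ((norm_nonneg _).trans (hC z hz'))
  refine eqOn_zero_horizontal_strip_of_eq_zero_on_line (c := (a + b) / 2) (by linarith)
    (by linarith) hd_cont hd_diff fun z hz => ?_
  have hρz : ρ z = z := Complex.ext (by simp [ρ]) (by rw [hρ_im, hz]; ring)
  have hz_mem : z ∈ im ⁻¹' Icc a b := by
    simp only [mem_preimage, mem_Icc, hz]; constructor <;> linarith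
  simpa [e, hρz, Complex.mul_conj] using he_zero hz_mem

theorem eq_of_eq_reflect_on_real {b : ℝ} (hb : 0 < b) {f g : ℂ → ℂ}
    (hf_bdd : ∃ C, ∀ z ∈ im ⁻¹' Icc 0 b, ‖f z‖ ≤ C) (hg_bdd : ∃ C, ∀ z ∈ im ⁻¹' Icc 0 b, ‖g z‖ ≤ C)
    (hf_cont : ContinuousOn f (im ⁻¹' Icc 0 b)) (hg_cont : ContinuousOn g (im ⁻¹' Icc 0 b))
    (hf_diff : DifferentiableOn ℂ f (im ⁻¹' Ioo 0 b))
    (hg_diff : DifferentiableOn ℂ g (im ⁻¹' Ioo 0 b))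
    (hfg : ∀ t : ℝ, f t = g (-t + b * I)) : f (b * I) = g 0 := by
  obtain ⟨Cf, hCf⟩ := hf_bdd
  obtain ⟨Cg, hCg⟩ := hg_bdd
  set σ : ℂ → ℂ := fun z => -z + b * I
  have hσ_im : ∀ z, (σ z).im = b - z.im := fun z => by simp [σ]; ring
  have hσ_Icc : MapsTo σ (im ⁻¹' Icc 0 b) (im ⁻¹' Icc 0 b) := fun z hz => by
    simp only [mem_preimage, mem_Icc, hσ_im] at hz ⊢; constructor <;> linarith [hz.1, hz.2]
  have hσ_Ioo : MapsTo σ (im ⁻¹' Ioo 0 b) (im ⁻¹' Ioo 0 b) := fun z hz => by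
    simp only [mem_preimage, mem_Ioo, hσ_im] at hz ⊢; constructor <;> linarith [hz.1, hz.2]
  have hzero := eqOn_zero_horizontal_strip_of_eq_zero_on_lower_edge hb (d := fun z => f z - g (σ z))
    ⟨Cf + Cg, fun z hz => (norm_sub_le _ _).trans (add_le_add (hCf z hz) (hCg _ (hσ_Icc hz)))⟩
    (hf_cont.sub (hg_cont.comp (by fun_prop) hσ_Icc))
    (hf_diff.sub (hg_diff.comp (by fun_prop) hσ_Ioo))
    (fun z hz => by rw [← re_add_im z, hz]; simpa [sub_eq_zero, σ] using hfg z.re)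
    (show (b * I : ℂ) ∈ im ⁻¹' Icc 0 b by simp [hb.le])
  simpa [σ, sub_eq_zero] using hzero

namespace ModularData

variable {𝓗 : Type*} [NormedAddCommGroup 𝓗] [InnerProductSpace ℂ 𝓗] [CompleteSpace 𝓗]
  (M : ModularData 𝓗)

theorem U_neg (t : ℝ) : M.U (-t) = (M.U t).symm := by
  ext x
  refine (M.U t).eq_symm_apply.2 ?_
  simpa [M.U_zero] using (LinearIsometryEquiv.ext_iff.1 (M.U_add t (-t)) x).symm

theorem inner_J_comm (x y : 𝓗) : (inner ℂ x (M.J y) : ℂ) = inner ℂ y (M.J x) := by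
  simpa [M.J_invol] using M.J_inner (M.J x) y

end ModularData

def IsCrossingSymmetric {𝓗 K : Type*} [NormedAddCommGroup 𝓗] [InnerProductSpace ℂ 𝓗]
    [CompleteSpace 𝓗] [NormedAddCommGroup K] [InnerProductSpace ℂ K] (M : ModularData 𝓗)
    (τ : 𝓗 →ₗ[ℂ] 𝓗 →ₗ[ℂ] K) (T : K →L[ℂ] K) (UL UR : ℝ → K ≃ₗᵢ[ℂ] K) : Prop :=
  ∀ ψ₁ ψ₂ ψ₃ ψ₄ : 𝓗, ∃ f : ℂ → ℂ,
    (∃ C : ℝ, ∀ z ∈ im ⁻¹' Icc 0 (1 / 2), ‖f z‖ ≤ C) ∧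
    ContinuousOn f (im ⁻¹' Icc 0 (1 / 2)) ∧ DifferentiableOn ℂ f (im ⁻¹' Ioo 0 (1 / 2)) ∧
    (∀ t : ℝ, f t = inner ℂ (τ ψ₂ ψ₁) (UL t (T (UR (-t) (τ ψ₃ ψ₄))))) ∧
    ∀ t : ℝ, f (t + I / 2) = inner ℂ (τ ψ₁ (M.J ψ₄)) (UR t (T (UL (-t) (τ (M.J ψ₂) ψ₃))))

section TensorSquare

variable {𝓗 K : Type*} [NormedAddCommGroup 𝓗] [InnerProductSpace ℂ 𝓗]
  [NormedAddCommGroup K] [InnerProductSpace ℂ K] {τ : 𝓗 →ₗ[ℂ] 𝓗 →ₗ[ℂ] K}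

theorem eq_of_eq_on_tensor
    (hτ : Dense ((Submodule.span ℂ {v : K | ∃ x y, v = τ x y} : Submodule ℂ K) : Set K))
    {E : Type*} [AddCommGroup E] [TopologicalSpace E] [T2Space E] {f g : K → E}
    (hf : Continuous f) (hg : Continuous g) (hf_add : ∀ u v, f (u + v) = f u + f v)
    (hg_add : ∀ u v, g (u + v) = g u + g v) (hfg : ∀ x y, f (τ x y) = g (τ x y)) : f = g := by
  refine hf.ext_on hτ hg fun v hv => ?_
  induction hv using Submodule.closure_induction with
  | zero =>
    exact (AddMonoidHom.mk' f hf_add).map_zero.trans (AddMonoidHom.mk' g hg_add).map_zero.symm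
  | add u v _ _ hu hv => rw [hf_add, hg_add, hu, hv]
  | smul_mem r v hv =>
    obtain ⟨x, y, rfl⟩ := hv
    rw [← LinearMap.smul_apply, ← map_smul]
    exact hfg _ _

theorem ext_inner_tensor
    (hτ : Dense ((Submodule.span ℂ {v : K | ∃ x y, v = τ x y} : Submodule ℂ K) : Set K))
    {u v : K} (h : ∀ x y, (inner ℂ (τ x y) u : ℂ) = inner ℂ (τ x y) v) : u = v :=
  ext_inner_left ℂ <| congrFun <| eq_of_eq_on_tensor hτ (f := fun w => inner ℂ w u)
    (g := fun w => inner ℂ w v) (by fun_prop) (by fun_prop) (by simp) (by simp) h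

theorem inner_tensor_flip
    (hτ : Dense ((Submodule.span ℂ {v : K | ∃ x y, v = τ x y} : Submodule ℂ K) : Set K))
    (hτ_inner : ∀ x y x' y', (inner ℂ (τ x y) (τ x' y') : ℂ) = inner ℂ x x' * inner ℂ y y')
    {F : K →L[ℂ] K} (hF : ∀ x y, F (τ x y) = τ y x) (x y : 𝓗) (w : K) :
    (inner ℂ (τ x y) (F w) : ℂ) = inner ℂ (τ y x) w := by
  refine congrFun (eq_of_eq_on_tensor hτ (f := fun w => inner ℂ (τ x y) (F w))
    (g := fun w => inner ℂ (τ y x) w) (by fun_prop) (by fun_prop) (by simp) (by simp)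
    fun x' y' => ?_) w
  simp only [hF, hτ_inner, mul_comm]

variable [CompleteSpace 𝓗] {M : ModularData 𝓗}

theorem inner_tensor_antiunitary
    (hτ : Dense ((Submodule.span ℂ {v : K | ∃ x y, v = τ x y} : Submodule ℂ K) : Set K))
    (hτ_inner : ∀ x y x' y', (inner ℂ (τ x y) (τ x' y') : ℂ) = inner ℂ x x' * inner ℂ y y')
    {JJ : K → K} (hJJ_cont : Continuous JJ) (hJJ_add : ∀ u v, JJ (u + v) = JJ u + JJ v)
    (hJJ_tensor : ∀ x y, JJ (τ x y) = τ (M.J x) (M.J y)) (x y : 𝓗) (w : K) :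
    (inner ℂ (τ x y) (JJ w) : ℂ) = inner ℂ w (JJ (τ x y)) := by
  refine congrFun (eq_of_eq_on_tensor hτ (f := fun w => inner ℂ (τ x y) (JJ w))
    (g := fun w => inner ℂ w (JJ (τ x y))) (by fun_prop) (by fun_prop)
    (by simp [hJJ_add]) (by simp) fun x' y' => ?_) w
  simp only [hJJ_tensor, hτ_inner, M.inner_J_comm x, M.inner_J_comm y]

theorem inner_tensor_apply_left {V : K ≃ₗᵢ[ℂ] K} {t : ℝ} (hV : ∀ x y, V (τ x y) = τ (M.U t x) y)
    (x y : 𝓗) (w : K) : (inner ℂ (τ x y) (V w) : ℂ) = inner ℂ (τ (M.U (-t) x) y) w := by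
  have : V.symm (τ x y) = τ (M.U (-t) x) y :=
    V.symm_apply_eq.2 (by rw [hV, M.U_neg, LinearIsometryEquiv.apply_symm_apply])
  rw [← this, V.symm.inner_map_eq_flip, LinearIsometryEquiv.symm_symm]

theorem inner_tensor_apply_right {V : K ≃ₗᵢ[ℂ] K} {t : ℝ} (hV : ∀ x y, V (τ x y) = τ x (M.U t y))
    (x y : 𝓗) (w : K) : (inner ℂ (τ x y) (V w) : ℂ) = inner ℂ (τ x (M.U (-t) y)) w := by
  have : V.symm (τ x y) = τ x (M.U (-t) y) :=
    V.symm_apply_eq.2 (by rw [hV, M.U_neg, LinearIsometryEquiv.apply_symm_apply])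
  rw [← this, V.symm.inner_map_eq_flip, LinearIsometryEquiv.symm_symm]

variable {T : K →L[ℂ] K} {UL UR : ℝ → K ≃ₗᵢ[ℂ] K}

theorem inner_tensor_modular_invariant (hUL : ∀ t x y, UL t (τ x y) = τ (M.U t x) y)
    (hUR : ∀ t x y, UR t (τ x y) = τ x (M.U t y))
    (hcompat : ∀ t v, T (UL t (UR t v)) = UL t (UR t (T v))) (s : ℝ) (x y x' y' : 𝓗) :
    (inner ℂ (τ (M.U s x) (M.U s y)) (T (τ (M.U s x') (M.U s y'))) : ℂ)
      = inner ℂ (τ x y) (T (τ x' y')) := by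
  have hW : ∀ x y, τ (M.U s x) (M.U s y) = UL s (UR s (τ x y)) := by simp [hUL, hUR]
  rw [hW, hW, hcompat, LinearIsometryEquiv.inner_map_map, LinearIsometryEquiv.inner_map_map]

theorem IsCrossingSymmetric.inner_tensor_eq (hcross : IsCrossingSymmetric M τ T UL UR)
    (hUL : ∀ t x y, UL t (τ x y) = τ (M.U t x) y) (hUR : ∀ t x y, UR t (τ x y) = τ x (M.U t y))
    (hcompat : ∀ t v, T (UL t (UR t v)) = UL t (UR t (T v))) (a b c d : 𝓗) :
    (inner ℂ (τ b a) (T (τ d c)) : ℂ) = inner ℂ (τ (M.J c) (M.J d)) (T (τ (M.J a) (M.J b))) := by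
  obtain ⟨f, hf_bdd, hf_cont, hf_diff, hf_real, hf_edge⟩ := hcross b (M.J d) c (M.J a)
  obtain ⟨g, hg_bdd, hg_cont, hg_diff, hg_real, hg_edge⟩ := hcross (M.J d) (M.J c) (M.J a) (M.J b)
  have hI : ((1 / 2 : ℝ) : ℂ) * I = I / 2 := by push_cast; ring
  have hfg : ∀ t : ℝ, f t = g (-t + ((1 / 2 : ℝ) : ℂ) * I) := fun t => by
    rw [hI, ← ofReal_neg, hg_edge, hf_real, inner_tensor_apply_left (hUL t),
      inner_tensor_apply_right (hUR (-t)), hUR, hUL, neg_neg, M.J_invol, M.J_invol]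
    simpa [M.U_neg] using inner_tensor_modular_invariant hUL hUR hcompat (-t) (M.J d)
      (M.U t b) (M.U t c) (M.J a)
  have hf_top : f (I / 2) = inner ℂ (τ b a) (T (τ d c)) := by
    simpa [M.J_invol, hUL, inner_tensor_apply_right (hUR 0), M.U_zero] using hf_edge 0
  have hg_bot : g 0 = inner ℂ (τ (M.J c) (M.J d)) (T (τ (M.J a) (M.J b))) := by
    simpa [hUR, inner_tensor_apply_left (hUL 0), M.U_zero] using hg_real 0
  rw [← hf_top, ← hg_bot, ← hI]
  exact eq_of_eq_reflect_on_real (by norm_num) hf_bdd hg_bdd hf_cont hg_cont hf_diff hg_diff hfg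

end TensorSquare

open Complex in
theorem crossing_symmetric_flip_conjugation_general
    {𝓗 K : Type*} [NormedAddCommGroup 𝓗] [InnerProductSpace ℂ 𝓗] [CompleteSpace 𝓗]
    [NormedAddCommGroup K] [InnerProductSpace ℂ K] [CompleteSpace K]
    (M : ModularData 𝓗)
    -- the Hilbert tensor square:
    (τ : 𝓗 →ₗ[ℂ] 𝓗 →ₗ[ℂ] K)
    (hτ_inner : ∀ x y x' y',
      (inner ℂ (τ x y) (τ x' y') : ℂ) = inner ℂ x x' * inner ℂ y y')
    (hτ_total : Dense ((Submodule.span ℂ {v : K | ∃ x y, v = τ x y} : Submodule ℂ K) : Set K))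
    -- the twist:
    (T : K →L[ℂ] K) (hT_sa : IsSelfAdjoint T)
    -- amplified modular unitaries `Δ^{it} ⊗ 1` and `1 ⊗ Δ^{it}`:
    (UL UR : ℝ → (K ≃ₗᵢ[ℂ] K))
    (hUL : ∀ t x y, UL t (τ x y) = τ (M.U t x) y)
    (hUR : ∀ t x y, UR t (τ x y) = τ x (M.U t y))
    -- the tensor flip `F` and the antiunitary `J ⊗ J`:
    (Fop : K →L[ℂ] K) (hF : ∀ x y, Fop (τ x y) = τ y x)
    (JJ : K → K) (hJJ_cont : Continuous JJ)
    (hJJ_add : ∀ u v, JJ (u + v) = JJ u + JJ v)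
    (hJJ_tensor : ∀ x y, JJ (τ x y) = τ (M.J x) (M.J y))
    -- compatibility `[Δ^{it} ⊗ Δ^{it}, T] = 0`:
    (hcompat : ∀ t (v : K), T (UL t (UR t v)) = UL t (UR t (T v)))
    -- crossing symmetry w.r.t. `H` (Def. 3.3):
    (hcrossing : ∀ ψ₁ ψ₂ ψ₃ ψ₄ : 𝓗, ∃ f : ℂ → ℂ,
      (∃ C : ℝ, ∀ z ∈ {z : ℂ | 0 ≤ z.im ∧ z.im ≤ 1 / 2}, ‖f z‖ ≤ C) ∧
      ContinuousOn f {z : ℂ | 0 ≤ z.im ∧ z.im ≤ 1 / 2} ∧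
      DifferentiableOn ℂ f {z : ℂ | 0 < z.im ∧ z.im < 1 / 2} ∧
      (∀ t : ℝ, f t = (inner ℂ (τ ψ₂ ψ₁) (UL t (T (UR (-t) (τ ψ₃ ψ₄)))) : ℂ)) ∧
      (∀ t : ℝ, f (t + Complex.I / 2)
        = (inner ℂ (τ ψ₁ (M.J ψ₄)) (UR t (T (UL (-t) (τ (M.J ψ₂) ψ₃)))) : ℂ))) :
    ∀ v : K, Fop (T (Fop v)) = JJ (T (JJ v)) := by
  refine congrFun (eq_of_eq_on_tensor hτ_total (f := fun v => Fop (T (Fop v)))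
    (g := fun v => JJ (T (JJ v))) (by fun_prop) (hJJ_cont.comp (T.continuous.comp hJJ_cont))
    (by simp) (by simp [hJJ_add]) fun c d => ext_inner_tensor hτ_total fun x y => ?_)
  calc (inner ℂ (τ x y) (Fop (T (Fop (τ c d)))) : ℂ)
      = inner ℂ (τ y x) (T (τ d c)) := by rw [inner_tensor_flip hτ_total hτ_inner hF, hF]
    _ = inner ℂ (τ (M.J c) (M.J d)) (T (τ (M.J x) (M.J y))) :=
      IsCrossingSymmetric.inner_tensor_eq hcrossing hUL hUR hcompat x y c d
    _ = inner ℂ (T (τ (M.J c) (M.J d))) (τ (M.J x) (M.J y)) := (hT_sa.isSymmetric _ _).symm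
    _ = inner ℂ (τ x y) (JJ (T (JJ (τ c d)))) := by
      rw [← hJJ_tensor, ← hJJ_tensor,
        inner_tensor_antiunitary hτ_total hτ_inner hJJ_cont hJJ_add hJJ_tensor]

open Complex in
/-- A crossing-symmetric compatible selfadjoint twist
satisfies `F T F = (J_H ⊗ J_H) T (J_H ⊗ J_H)`. -/
theorem crossing_symmetric_flip_conjugation
    {𝓗 K : Type*} [NormedAddCommGroup 𝓗] [InnerProductSpace ℂ 𝓗] [CompleteSpace 𝓗]
    [NormedAddCommGroup K] [InnerProductSpace ℂ K] [CompleteSpace K]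
    (M : ModularData 𝓗)
    -- the Hilbert tensor square:
    (τ : 𝓗 →ₗ[ℂ] 𝓗 →ₗ[ℂ] K)
    (hτ_inner : ∀ x y x' y',
      (inner ℂ (τ x y) (τ x' y') : ℂ) = inner ℂ x x' * inner ℂ y y')
    (hτ_total : Dense ((Submodule.span ℂ {v : K | ∃ x y, v = τ x y} : Submodule ℂ K) : Set K))
    -- the twist:
    (T : K →L[ℂ] K) (hT_sa : IsSelfAdjoint T)
    -- amplified modular unitaries `Δ^{it} ⊗ 1` and `1 ⊗ Δ^{it}`:
    (UL UR : ℝ → (K ≃ₗᵢ[ℂ] K))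
    (hUL : ∀ t x y, UL t (τ x y) = τ (M.U t x) y)
    (hUR : ∀ t x y, UR t (τ x y) = τ x (M.U t y))
    -- the tensor flip `F` and the antiunitary `J ⊗ J`:
    (Fop : K →L[ℂ] K) (hF : ∀ x y, Fop (τ x y) = τ y x)
    (JJ : K → K) (hJJ_cont : Continuous JJ)
    (hJJ_add : ∀ u v, JJ (u + v) = JJ u + JJ v)
    (hJJ_smul : ∀ (c : ℂ) (v : K), JJ (c • v) = (starRingEnd ℂ) c • JJ v)
    (hJJ_tensor : ∀ x y, JJ (τ x y) = τ (M.J x) (M.J y))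
    -- compatibility `[Δ^{it} ⊗ Δ^{it}, T] = 0`:
    (hcompat : ∀ t (v : K), T (UL t (UR t v)) = UL t (UR t (T v)))
    -- crossing symmetry w.r.t. `H` (Def. 3.3):
    (hcrossing : ∀ ψ₁ ψ₂ ψ₃ ψ₄ : 𝓗, ∃ f : ℂ → ℂ,
      (∃ C : ℝ, ∀ z ∈ {z : ℂ | 0 ≤ z.im ∧ z.im ≤ 1 / 2}, ‖f z‖ ≤ C) ∧
      ContinuousOn f {z : ℂ | 0 ≤ z.im ∧ z.im ≤ 1 / 2} ∧
      DifferentiableOn ℂ f {z : ℂ | 0 < z.im ∧ z.im < 1 / 2} ∧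
      (∀ t : ℝ, f t = (inner ℂ (τ ψ₂ ψ₁) (UL t (T (UR (-t) (τ ψ₃ ψ₄)))) : ℂ)) ∧
      (∀ t : ℝ, f (t + Complex.I / 2)
        = (inner ℂ (τ ψ₁ (M.J ψ₄)) (UR t (T (UL (-t) (τ (M.J ψ₂) ψ₃)))) : ℂ))) :
    ∀ v : K, Fop (T (Fop v)) = JJ (T (JJ v)) :=
  crossing_symmetric_flip_conjugation_general M τ hτ_inner hτ_total T hT_sa UL UR hUL hUR Fop hF JJ
    hJJ_cont hJJ_add hJJ_tensor hcompat hcrossing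
end

section
/- Separately continuous extension of strip-analytic boundary-value functionals: let Z_1, Z_2 be closed antilinear operators, and suppose f assigns to R (a uniformly bounded B(H^{⊗(n+1)})-valued function on ℝ), ξ_1 ∈ D(Z_1), Ψ ∈ H^{⊗n}, ξ_2 ∈ D(Z_2), Φ ∈ H^{⊗n}, a bounded analytic function on the strip S_α with continuous boundary values f(...)(t) = ⟨ξ_1⊗Ψ, R(t)(Φ⊗ξ_2)⟩ and f(...)(t+iα) = ⟨Ψ⊗Z_2ξ_2, Θ(R)(t)(Z_1ξ_1⊗Φ)⟩ for a continuous map Θ. Then sup over the closed strip of |f| is bounded by (sup_t ‖R(t)‖ + sup_t ‖Θ(R)(t)‖) · (‖ξ_1‖+‖Z_1ξ_1‖)(‖ξ_2‖+‖Z_2ξ_2‖)‖Ψ‖‖Φ‖, and f is separately continuous in all arguments (with graph norms on D(Z_i)), hence extends uniquely to the respective closed spans. -/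
/-!
On the boundary lines the function is a matrix element of a bounded operator between
elementary tensors, so the cross-norm property bounds it by the operator norm times
`(‖ξ₁‖ + ‖Z₁ξ₁‖)(‖ξ₂‖ + ‖Z₂ξ₂‖)‖Ψ‖‖Φ‖`. A bounded holomorphic function on a strip is
controlled by its boundary values (Phragmén–Lindelöf), which gives the first estimate.
The second one is the same estimate for `f - g`, whose boundary values are the matrix
elements of `R - S` and `Θ(R) - Θ(S)`.
-/

open Complex Set Filter

theorem norm_le_of_bounded_on_horizontal_strip {F : Type*} [NormedAddCommGroup F]
    [NormedSpace ℂ F] {a b C : ℝ} (hab : a < b) {f : ℂ → F}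
    (hB : ∃ B, ∀ z ∈ im ⁻¹' Icc a b, ‖f z‖ ≤ B)
    (hc : ContinuousOn f (im ⁻¹' Icc a b)) (hd : DifferentiableOn ℂ f (im ⁻¹' Ioo a b))
    (hle_a : ∀ z : ℂ, z.im = a → ‖f z‖ ≤ C) (hle_b : ∀ z : ℂ, z.im = b → ‖f z‖ ≤ C)
    {z : ℂ} (hz : z ∈ im ⁻¹' Icc a b) : ‖f z‖ ≤ C := by
  obtain ⟨B, hB⟩ := hB
  have hdc : DiffContOnCl ℂ f (im ⁻¹' Ioo a b) :=
    ⟨hd, by rwa [closure_preimage_im, closure_Ioo hab.ne]⟩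
  refine PhragmenLindelof.horizontal_strip hdc
    ⟨0, div_pos Real.pi_pos (sub_pos.2 hab), 0, ?_⟩ hle_a hle_b hz.1 hz.2
  refine Asymptotics.IsBigO.of_bound B (mem_inf_of_right (mem_principal.2 fun w hw => ?_))
  simpa using hB w (Ioo_subset_Icc_self hw)

theorem norm_inner_apply_le {𝕜 E F : Type*} [RCLike 𝕜] [SeminormedAddCommGroup E]
    [InnerProductSpace 𝕜 E] [SeminormedAddCommGroup F] [NormedSpace 𝕜 F]
    {T : F →L[𝕜] E} {M : ℝ} (hT : ‖T‖ ≤ M) (x : E) (y : F) :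
    ‖(inner 𝕜 x (T y) : 𝕜)‖ ≤ M * (‖x‖ * ‖y‖) :=
  calc ‖(inner 𝕜 x (T y) : 𝕜)‖ ≤ ‖x‖ * ‖T y‖ := norm_inner_le_norm x (T y)
    _ ≤ ‖x‖ * (M * ‖y‖) := by gcongr; exact T.le_of_opNorm_le hT y
    _ = M * (‖x‖ * ‖y‖) := by ring

theorem norm_le_of_inner_boundary_values {H G E : Type*} [SeminormedAddCommGroup H]
    [SeminormedAddCommGroup G] [SeminormedAddCommGroup E] [InnerProductSpace ℂ E]
    {τ₁ : H → G → E} {τ₂ : G → H → E}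
    (hτ₁ : ∀ x y, ‖τ₁ x y‖ = ‖x‖ * ‖y‖) (hτ₂ : ∀ x y, ‖τ₂ x y‖ = ‖x‖ * ‖y‖)
    {α M : ℝ} (hα : 0 < α) {x₁ y₁ x₂ y₂ : H} {Ψ Φ : G} {R Θ : ℝ → E →L[ℂ] E}
    (hR : ∀ t, ‖R t‖ ≤ M) (hΘ : ∀ t, ‖Θ t‖ ≤ M) {f : ℂ → ℂ}
    (hB : ∃ B, ∀ z ∈ im ⁻¹' Icc 0 α, ‖f z‖ ≤ B)
    (hc : ContinuousOn f (im ⁻¹' Icc 0 α)) (hd : DifferentiableOn ℂ f (im ⁻¹' Ioo 0 α))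
    (hf₀ : ∀ t : ℝ, f t = (inner ℂ (τ₁ x₁ Ψ) (R t (τ₂ Φ x₂)) : ℂ))
    (hfα : ∀ t : ℝ, f (t + I * α) = (inner ℂ (τ₂ Ψ y₂) (Θ t (τ₁ y₁ Φ)) : ℂ))
    {z : ℂ} (hz : z ∈ im ⁻¹' Icc 0 α) :
    ‖f z‖ ≤ M * ((‖x₁‖ + ‖y₁‖) * (‖x₂‖ + ‖y₂‖) * ‖Ψ‖ * ‖Φ‖) := by
  have hM : 0 ≤ M := (norm_nonneg _).trans (hR 0)
  have hx : ‖x₁‖ * ‖x₂‖ ≤ (‖x₁‖ + ‖y₁‖) * (‖x₂‖ + ‖y₂‖) := by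
    gcongr <;> exact le_add_of_nonneg_right (norm_nonneg _)
  have hy : ‖y₁‖ * ‖y₂‖ ≤ (‖x₁‖ + ‖y₁‖) * (‖x₂‖ + ‖y₂‖) := by
    gcongr <;> exact le_add_of_nonneg_left (norm_nonneg _)
  refine norm_le_of_bounded_on_horizontal_strip hα hB hc hd (fun w hw => ?_) (fun w hw => ?_) hz
  · rw [show w = w.re from Complex.ext (by simp) (by simp [hw]), hf₀]
    refine (norm_inner_apply_le (hR _) _ _).trans (mul_le_mul_of_nonneg_left ?_ hM)
    rw [hτ₁, hτ₂]
    calc ‖x₁‖ * ‖Ψ‖ * (‖Φ‖ * ‖x₂‖) = ‖x₁‖ * ‖x₂‖ * (‖Ψ‖ * ‖Φ‖) := by ring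
      _ ≤ (‖x₁‖ + ‖y₁‖) * (‖x₂‖ + ‖y₂‖) * (‖Ψ‖ * ‖Φ‖) :=
        mul_le_mul_of_nonneg_right hx (by positivity)
      _ = _ := by ring
  · rw [show w = w.re + I * α from Complex.ext (by simp) (by simp [hw]), hfα]
    refine (norm_inner_apply_le (hΘ _) _ _).trans (mul_le_mul_of_nonneg_left ?_ hM)
    rw [hτ₁, hτ₂]
    calc ‖Ψ‖ * ‖y₂‖ * (‖y₁‖ * ‖Φ‖) = ‖y₁‖ * ‖y₂‖ * (‖Ψ‖ * ‖Φ‖) := by ring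
      _ ≤ (‖x₁‖ + ‖y₁‖) * (‖x₂‖ + ‖y₂‖) * (‖Ψ‖ * ‖Φ‖) :=
        mul_le_mul_of_nonneg_right hy (by positivity)
      _ = _ := by ring

theorem extension_lemma_estimates_general
    {𝓗 G E : Type*}
    [NormedAddCommGroup 𝓗] [InnerProductSpace ℂ 𝓗]
    [NormedAddCommGroup G] [InnerProductSpace ℂ G]
    [NormedAddCommGroup E] [InnerProductSpace ℂ E]
    (α : ℝ) (hα : 0 < α)
    (D₁ D₂ : Submodule ℂ 𝓗) (Z₁ : D₁ → 𝓗) (Z₂ : D₂ → 𝓗)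
    (τ₁ : 𝓗 → G → E) (τ₂ : G → 𝓗 → E)
    (hτ₁_norm : ∀ x y, ‖τ₁ x y‖ = ‖x‖ * ‖y‖)
    (hτ₂_norm : ∀ x y, ‖τ₂ x y‖ = ‖x‖ * ‖y‖)
    (ξ₁ : D₁) (ξ₂ : D₂) (Ψ Φ : G)
    -- the two boundary operator families and the analytic functions:
    (R ΘR S ΘS : ℝ → (E →L[ℂ] E))
    (f g : ℂ → ℂ)
    (hf_bdd : ∃ C : ℝ, ∀ z ∈ {z : ℂ | 0 ≤ z.im ∧ z.im ≤ α}, ‖f z‖ ≤ C)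
    (hf_cont : ContinuousOn f {z : ℂ | 0 ≤ z.im ∧ z.im ≤ α})
    (hf_anal : DifferentiableOn ℂ f {z : ℂ | 0 < z.im ∧ z.im < α})
    (hf_bv₀ : ∀ t : ℝ, f t = (inner ℂ (τ₁ (ξ₁ : 𝓗) Ψ) (R t (τ₂ Φ (ξ₂ : 𝓗))) : ℂ))
    (hf_bvα : ∀ t : ℝ, f (t + Complex.I * α)
      = (inner ℂ (τ₂ Ψ (Z₂ ξ₂)) (ΘR t (τ₁ (Z₁ ξ₁) Φ)) : ℂ))
    (hg_bdd : ∃ C : ℝ, ∀ z ∈ {z : ℂ | 0 ≤ z.im ∧ z.im ≤ α}, ‖g z‖ ≤ C)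
    (hg_cont : ContinuousOn g {z : ℂ | 0 ≤ z.im ∧ z.im ≤ α})
    (hg_anal : DifferentiableOn ℂ g {z : ℂ | 0 < z.im ∧ z.im < α})
    (hg_bv₀ : ∀ t : ℝ, g t = (inner ℂ (τ₁ (ξ₁ : 𝓗) Ψ) (S t (τ₂ Φ (ξ₂ : 𝓗))) : ℂ))
    (hg_bvα : ∀ t : ℝ, g (t + Complex.I * α)
      = (inner ℂ (τ₂ Ψ (Z₂ ξ₂)) (ΘS t (τ₁ (Z₁ ξ₁) Φ)) : ℂ)) :
    -- three-lines bound: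
    (∀ MR MΘ : ℝ, (∀ t, ‖R t‖ ≤ MR) → (∀ t, ‖ΘR t‖ ≤ MΘ) →
      ∀ z ∈ {z : ℂ | 0 ≤ z.im ∧ z.im ≤ α},
        ‖f z‖ ≤ (MR + MΘ) *
          ((‖(ξ₁ : 𝓗)‖ + ‖Z₁ ξ₁‖) * (‖(ξ₂ : 𝓗)‖ + ‖Z₂ ξ₂‖) * ‖Ψ‖ * ‖Φ‖)) ∧
    -- Lipschitz continuity in the operator variable:
    (∀ MRS MΘRS : ℝ, (∀ t, ‖R t - S t‖ ≤ MRS) → (∀ t, ‖ΘR t - ΘS t‖ ≤ MΘRS) →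
      ∀ z ∈ {z : ℂ | 0 ≤ z.im ∧ z.im ≤ α},
        ‖f z - g z‖ ≤ max MRS MΘRS *
          ((‖(ξ₁ : 𝓗)‖ + ‖Z₁ ξ₁‖) * (‖(ξ₂ : 𝓗)‖ + ‖Z₂ ξ₂‖) * ‖Ψ‖ * ‖Φ‖)) := by
  refine ⟨fun MR MΘ hR hΘ z hz => ?_, fun MRS MΘRS hR hΘ z hz => ?_⟩
  · have hMR : 0 ≤ MR := (norm_nonneg _).trans (hR 0)
    have hMΘ : 0 ≤ MΘ := (norm_nonneg _).trans (hΘ 0)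
    exact norm_le_of_inner_boundary_values hτ₁_norm hτ₂_norm hα
      (fun t => (hR t).trans (le_add_of_nonneg_right hMΘ))
      (fun t => (hΘ t).trans (le_add_of_nonneg_left hMR)) hf_bdd hf_cont hf_anal hf_bv₀ hf_bvα hz
  · have hfg_bdd : ∃ B, ∀ z ∈ im ⁻¹' Icc 0 α, ‖(f - g) z‖ ≤ B := by
      obtain ⟨Cf, hCf⟩ := hf_bdd
      obtain ⟨Cg, hCg⟩ := hg_bdd
      exact ⟨Cf + Cg, fun z hz => (norm_sub_le _ _).trans (add_le_add (hCf z hz) (hCg z hz))⟩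
    exact norm_le_of_inner_boundary_values (R := R - S) (Θ := ΘR - ΘS) hτ₁_norm hτ₂_norm hα
      (fun t => (hR t).trans (le_max_left _ _)) (fun t => (hΘ t).trans (le_max_right _ _))
      hfg_bdd (hf_cont.sub hg_cont) (hf_anal.sub hg_anal)
      (fun t => by simp only [Pi.sub_apply, hf_bv₀, hg_bv₀, sub_apply,
        inner_sub_right])
      (fun t => by simp only [Pi.sub_apply, hf_bvα, hg_bvα, sub_apply,
        inner_sub_right]) hz

/-- The bound and continuity estimates of the extension
lemma. -/
theorem extension_lemma_estimates
    {𝓗 G E : Type*}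
    [NormedAddCommGroup 𝓗] [InnerProductSpace ℂ 𝓗] [CompleteSpace 𝓗]
    [NormedAddCommGroup G] [InnerProductSpace ℂ G] [CompleteSpace G]
    [NormedAddCommGroup E] [InnerProductSpace ℂ E] [CompleteSpace E]
    (α : ℝ) (hα : 0 < α)
    (D₁ D₂ : Submodule ℂ 𝓗) (Z₁ : D₁ → 𝓗) (Z₂ : D₂ → 𝓗)
    (τ₁ : 𝓗 → G → E) (τ₂ : G → 𝓗 → E)
    (hτ₁_norm : ∀ x y, ‖τ₁ x y‖ = ‖x‖ * ‖y‖)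
    (hτ₂_norm : ∀ x y, ‖τ₂ x y‖ = ‖x‖ * ‖y‖)
    (ξ₁ : D₁) (ξ₂ : D₂) (Ψ Φ : G)
    -- the two boundary operator families and the analytic functions:
    (R ΘR S ΘS : ℝ → (E →L[ℂ] E))
    (f g : ℂ → ℂ)
    (hf_bdd : ∃ C : ℝ, ∀ z ∈ {z : ℂ | 0 ≤ z.im ∧ z.im ≤ α}, ‖f z‖ ≤ C)
    (hf_cont : ContinuousOn f {z : ℂ | 0 ≤ z.im ∧ z.im ≤ α})
    (hf_anal : DifferentiableOn ℂ f {z : ℂ | 0 < z.im ∧ z.im < α})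
    (hf_bv₀ : ∀ t : ℝ, f t = (inner ℂ (τ₁ (ξ₁ : 𝓗) Ψ) (R t (τ₂ Φ (ξ₂ : 𝓗))) : ℂ))
    (hf_bvα : ∀ t : ℝ, f (t + Complex.I * α)
      = (inner ℂ (τ₂ Ψ (Z₂ ξ₂)) (ΘR t (τ₁ (Z₁ ξ₁) Φ)) : ℂ))
    (hg_bdd : ∃ C : ℝ, ∀ z ∈ {z : ℂ | 0 ≤ z.im ∧ z.im ≤ α}, ‖g z‖ ≤ C)
    (hg_cont : ContinuousOn g {z : ℂ | 0 ≤ z.im ∧ z.im ≤ α})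
    (hg_anal : DifferentiableOn ℂ g {z : ℂ | 0 < z.im ∧ z.im < α})
    (hg_bv₀ : ∀ t : ℝ, g t = (inner ℂ (τ₁ (ξ₁ : 𝓗) Ψ) (S t (τ₂ Φ (ξ₂ : 𝓗))) : ℂ))
    (hg_bvα : ∀ t : ℝ, g (t + Complex.I * α)
      = (inner ℂ (τ₂ Ψ (Z₂ ξ₂)) (ΘS t (τ₁ (Z₁ ξ₁) Φ)) : ℂ)) :
    -- three-lines bound:
    (∀ MR MΘ : ℝ, (∀ t, ‖R t‖ ≤ MR) → (∀ t, ‖ΘR t‖ ≤ MΘ) →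
      ∀ z ∈ {z : ℂ | 0 ≤ z.im ∧ z.im ≤ α},
        ‖f z‖ ≤ (MR + MΘ) *
          ((‖(ξ₁ : 𝓗)‖ + ‖Z₁ ξ₁‖) * (‖(ξ₂ : 𝓗)‖ + ‖Z₂ ξ₂‖) * ‖Ψ‖ * ‖Φ‖)) ∧
    -- Lipschitz continuity in the operator variable:
    (∀ MRS MΘRS : ℝ, (∀ t, ‖R t - S t‖ ≤ MRS) → (∀ t, ‖ΘR t - ΘS t‖ ≤ MΘRS) →
      ∀ z ∈ {z : ℂ | 0 ≤ z.im ∧ z.im ≤ α},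
        ‖f z - g z‖ ≤ max MRS MΘRS *
          ((‖(ξ₁ : 𝓗)‖ + ‖Z₁ ξ₁‖) * (‖(ξ₂ : 𝓗)‖ + ‖Z₂ ξ₂‖) * ‖Ψ‖ * ‖Φ‖)) :=
  extension_lemma_estimates_general α hα D₁ D₂ Z₁ Z₂ τ₁ τ₂ hτ₁_norm hτ₂_norm ξ₁ ξ₂ Ψ Φ R ΘR S ΘS f g
    hf_bdd hf_cont hf_anal hf_bv₀ hf_bvα hg_bdd hg_cont hg_anal hg_bv₀ hg_bvα
end
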